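/- Let n ≥ 1. Let u, v : Fin (n+2) → ℝ be linearly independent such that P = span{u,v} contains exactly one null direction (there is a nonzero null vector in P and any two nonzero null vectors in P are parallel), and similarly let u', v' be linearly independent with P' = span{u',v'} containing exactly one null direction; assume P ≠ P'. Set B = u∧v and B' = u'∧v'. Then P ∩ P' contains a nonzero null vector (the two null 2-planes intersect along a null line) if and only if both: the full antisymmetrization over all four indices of (i,j,k,l) ↦ B i j * B' k l vanishes for all i,j,k,l, and B·B' = Σ_{i,j} ε i * ε j * B i j * B' i j = 0. -/

import Mathlib

open Finset

/-- The Minkowski signature factor: `ε 0 = 1`, `ε i = −1` for `i ≠ 0`. -/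
noncomputable def eps {n : ℕ} (i : Fin (n + 2)) : ℝ := if i = 0 then 1 else -1

/-- The Minkowski bilinear form `⟨x,y⟩ = x 0 * y 0 − Σ_{a=1}^{n+1} x a * y a` on ℝ^{n+2}. -/
noncomputable def mink {n : ℕ} (x y : Fin (n + 2) → ℝ) : ℝ :=
  ∑ i, eps i * x i * y i

/-- The simple bivector `(u∧v) i j = u i * v j − v i * u j`. -/
noncomputable def wedge {m : ℕ} (u v : Fin m → ℝ) : Fin m → Fin m → ℝ :=
  fun i j => u i * v j - v i * u j

/-- The η-contraction `B·B' = Σ_{i,j} ε i * ε j * B i j * B' i j`. -/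
noncomputable def contr {n : ℕ} (B B' : Fin (n + 2) → Fin (n + 2) → ℝ) : ℝ :=
  ∑ i, ∑ j, eps i * eps j * B i j * B' i j

/-- Full antisymmetrization of a 4-index expression over all four index slots. -/
noncomputable def alt4 {m : ℕ} (T : Fin m → Fin m → Fin m → Fin m → ℝ)
    (i j k l : Fin m) : ℝ :=
  (1 / 24 : ℝ) * ∑ σ : Equiv.Perm (Fin 4),
    ((Equiv.Perm.sign σ : ℤ) : ℝ) *
      T (![i, j, k, l] (σ 0)) (![i, j, k, l] (σ 1)) (![i, j, k, l] (σ 2)) (![i, j, k, l] (σ 3))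

/-
The antisymmetrised product `B_{[ij} B'_{kl]}` is `1/6` of the `4 × 4` minor of the matrix with
rows `u, v, u', v'` on the columns `i, j, k, l`; all of these vanish iff the four rows are
dependent, i.e. iff `P ∩ P'` contains some `w ≠ 0`. The contraction satisfies
`(x∧y)·(z∧t) = 2(⟨x,z⟩⟨y,t⟩ - ⟨x,t⟩⟨y,z⟩)`, and since a plane has a single null direction, its
null vectors are orthogonal to the whole plane.
If `w` is null it is orthogonal to `u'` and `v'`, so the `2 × 2` matrix `(⟨p, p'⟩)` pairing the
bases of `P` and `P'` is singular, and `B·B'` is twice its determinant. If `w` is not null, take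
null `z ∈ P`, `z' ∈ P'`: `z∧w` and `z'∧w` are multiples of `B` and `B'`, so `B·B' = 0` forces
`0 = (z∧w)·(z'∧w) = 2⟨z,z'⟩⟨w,w⟩`. Orthogonal null vectors are parallel, hence `z ∈ P'`.
-/

open Equiv
open scoped Matrix

namespace Matrix

variable {R : Type*} [CommRing R] {ι κ : Type*} [Fintype ι] [DecidableEq ι]

theorem det_eq_sum_sign_mul_prod (M : Matrix ι ι R) :
    M.det = ∑ σ : Perm ι, ((Perm.sign σ : ℤ) : R) * ∏ i, M i (σ i) := by
  rw [← det_transpose, det_apply']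
  rfl

theorem det_mul_eq_sum_prod_mul_det_submatrix [Fintype κ] (A : Matrix ι κ R)
    (B : Matrix κ ι R) :
    (A * B).det = ∑ f : ι → κ, (∏ i, A i (f i)) * (B.submatrix f id).det := by
  have hrows : (A * B : ι → ι → R) = fun i => ∑ k, A i k • B k := by
    ext i j
    simp [mul_apply, Finset.sum_apply]
  change detRowAlternating.toMultilinearMap (A * B) = _
  rw [hrows, MultilinearMap.map_sum]
  refine sum_congr rfl fun f _ => ?_
  rw [MultilinearMap.map_smul_univ, smul_eq_mul]
  rfl

theorem sum_sign_mul_prod_comp_perm (r : ι → κ → R) (x : ι → κ) (τ : Perm ι) :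
    ∑ σ : Perm ι, ((Perm.sign σ : ℤ) : R) * ∏ b, r (τ b) (x (σ b)) =
      ((Perm.sign τ : ℤ) : R) * (of fun a b => r a (x b)).det := by
  rw [← det_permute, det_eq_sum_sign_mul_prod]
  rfl

end Matrix

theorem linearIndependent_iff_exists_det_ne_zero {ι κ : Type*} [Fintype ι] [DecidableEq ι]
    [Fintype κ] (W : ι → κ → ℝ) :
    LinearIndependent ℝ W ↔ ∃ f : ι → κ, (Matrix.of fun a b => W a (f b)).det ≠ 0 := by
  constructor
  · intro hW
    -- The Gram determinant of the rows is nonzero and, by multilinearity, a combination of minors.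
    have hgram : (Matrix.of W * (Matrix.of W)ᵀ).det ≠ 0 := by
      have hG : Matrix.of W * (Matrix.of W)ᵀ = Matrix.gram ℝ (fun a => WithLp.toLp 2 (W a)) := by
        ext a b
        simp [Matrix.gram, Matrix.mul_apply, EuclideanSpace.inner_toLp_toLp, dotProduct, mul_comm]
      rw [hG, Matrix.det_gram_ne_zero_iff_linearIndependent]
      exact hW.map' (WithLp.linearEquiv 2 ℝ (κ → ℝ)).symm.toLinearMap (LinearEquiv.ker _)
    contrapose! hgram
    rw [Matrix.det_mul_eq_sum_prod_mul_det_submatrix]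
    refine sum_eq_zero fun f _ => ?_
    rw [← Matrix.det_transpose, Matrix.transpose_submatrix, Matrix.transpose_transpose]
    exact mul_eq_zero_of_right _ (hgram f)
  · rintro ⟨f, hf⟩
    exact (Matrix.linearIndependent_rows_of_det_ne_zero hf).of_comp (LinearMap.funLeft ℝ ℝ f)

theorem not_linearIndependent_iff_exists_mem_inf_ne_zero {R M : Type*} [Ring R]
    [AddCommGroup M] [Module R M] {u v u' v' : M}
    (huv : LinearIndependent R ![u, v]) (huv' : LinearIndependent R ![u', v']) :
    ¬ LinearIndependent R ![u, v, u', v'] ↔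
      ∃ w ∈ Submodule.span R {u, v} ⊓ Submodule.span R {u', v'}, w ≠ 0 := by
  have happend : ![u, v, u', v'] = Sum.elim ![u, v] ![u', v'] ∘ finSumFinEquiv.symm := by
    ext i; fin_cases i <;> rfl
  rw [happend, linearIndependent_equiv, linearIndependent_sum]
  simp only [Sum.elim_comp_inl, Sum.elim_comp_inr, Matrix.range_cons_cons_empty, huv, huv',
    true_and, Submodule.disjoint_def]
  push Not
  simp [Submodule.mem_inf, and_assoc]

section Wedge

variable {m : ℕ}

theorem wedge_smul_add_smul (α β a b : ℝ) (u v : Fin m → ℝ) :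
    wedge (α • u + β • v) (a • u + b • v) = (α * b - β * a) • wedge u v := by
  ext i j
  simp only [wedge, Pi.add_apply, Pi.smul_apply, smul_eq_mul]
  ring

theorem exists_wedge_eq_smul_of_mem_span_pair {u v x y : Fin m → ℝ}
    (hx : x ∈ Submodule.span ℝ {u, v}) (hy : y ∈ Submodule.span ℝ {u, v}) :
    ∃ c : ℝ, wedge x y = c • wedge u v := by
  obtain ⟨α, β, rfl⟩ := Submodule.mem_span_pair.1 hx
  obtain ⟨a, b, rfl⟩ := Submodule.mem_span_pair.1 hy
  exact ⟨_, wedge_smul_add_smul α β a b u v⟩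

theorem alt4_wedge_mul_wedge (u v u' v' : Fin m → ℝ) (i j k l : Fin m) :
    alt4 (fun i j k l => wedge u v i j * wedge u' v' k l) i j k l =
      1 / 6 * (Matrix.of fun a b => ![u, v, u', v'] a (![i, j, k, l] b)).det := by
  simp only [alt4]
  set r := ![u, v, u', v']
  set x := ![i, j, k, l]
  -- `B i j * B' k l` is the signed sum of the four row orders of `r` that preserve the pairs
  -- `{u, v}` and `{u', v'}`; each contributes one determinant, so the total is `4/24 = 1/6`.
  have expand : ∀ σ : Perm (Fin 4),
      wedge u v (x (σ 0)) (x (σ 1)) * wedge u' v' (x (σ 2)) (x (σ 3)) =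
        ∏ b, r ((1 : Perm (Fin 4)) b) (x (σ b)) - ∏ b, r (swap 0 1 b) (x (σ b))
          - ∏ b, r (swap 2 3 b) (x (σ b))
          + ∏ b, r ((swap 0 1 * swap 2 3 : Perm (Fin 4)) b) (x (σ b)) := by
    intro σ
    simp only [wedge, r, Fin.prod_univ_four, Perm.coe_one, id_eq, Perm.coe_mul,
      Function.comp_apply, swap_apply_left, swap_apply_right, ne_eq, Fin.reduceEq,
      not_false_eq_true, swap_apply_of_ne_of_ne, Matrix.cons_val_zero, Matrix.cons_val_one,
      Matrix.cons_val]
    ring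
  simp only [expand, mul_sub, mul_add, sum_add_distrib, sum_sub_distrib,
    Matrix.sum_sign_mul_prod_comp_perm]
  rw [Perm.sign_one, Perm.sign_mul, Perm.sign_swap (by decide), Perm.sign_swap (by decide)]
  push_cast
  ring

theorem alt4_wedge_mul_wedge_eq_zero_iff (u v u' v' : Fin m → ℝ) :
    (∀ i j k l, alt4 (fun i j k l => wedge u v i j * wedge u' v' k l) i j k l = 0) ↔
      ¬ LinearIndependent ℝ ![u, v, u', v'] := by
  simp only [alt4_wedge_mul_wedge, linearIndependent_iff_exists_det_ne_zero, mul_eq_zero,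
    one_div, inv_eq_zero, OfNat.ofNat_ne_zero, false_or, not_exists, not_not]
  refine ⟨fun h f => ?_, fun h i j k l => h _⟩
  have hf : ![f 0, f 1, f 2, f 3] = f := by ext b; fin_cases b <;> rfl
  simpa only [hf] using h (f 0) (f 1) (f 2) (f 3)

end Wedge

section Minkowski

variable {n : ℕ}

theorem mink_comm (x y : Fin (n + 2) → ℝ) : mink x y = mink y x := by
  simp only [mink, mul_right_comm]

theorem mink_add_left (x y z : Fin (n + 2) → ℝ) : mink (x + y) z = mink x z + mink y z := by
  simp only [mink, Pi.add_apply, ← sum_add_distrib]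
  exact sum_congr rfl fun i _ => by ring

theorem mink_smul_left (c : ℝ) (x y : Fin (n + 2) → ℝ) : mink (c • x) y = c * mink x y := by
  simp only [mink, Pi.smul_apply, smul_eq_mul, mul_sum]
  exact sum_congr rfl fun i _ => by ring

theorem mink_add_right (x y z : Fin (n + 2) → ℝ) : mink x (y + z) = mink x y + mink x z := by
  rw [mink_comm, mink_add_left, mink_comm y, mink_comm z]

theorem mink_smul_right (c : ℝ) (x y : Fin (n + 2) → ℝ) : mink x (c • y) = c * mink x y := by
  rw [mink_comm, mink_smul_left, mink_comm]

theorem mink_self (x : Fin (n + 2) → ℝ) :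
    mink x x = x 0 ^ 2 - ∑ i : Fin (n + 1), x i.succ ^ 2 := by
  rw [mink, Fin.sum_univ_succ]
  simp [eps, Fin.succ_ne_zero, sq, sub_eq_add_neg]

theorem eq_zero_of_mink_self_eq_zero_of_apply_zero {x : Fin (n + 2) → ℝ} (hx : mink x x = 0)
    (h0 : x 0 = 0) : x = 0 := by
  rw [mink_self, h0] at hx
  have hsum : ∑ i : Fin (n + 1), x i.succ ^ 2 = 0 := by linarith
  have := (sum_eq_zero_iff_of_nonneg fun i _ => sq_nonneg (x i.succ)).1 hsum
  ext i
  cases i using Fin.cases with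
  | zero => exact h0
  | succ i => simpa using this i (mem_univ i)

theorem exists_eq_smul_of_mink_eq_zero {x y : Fin (n + 2) → ℝ} (hx : mink x x = 0)
    (hy : mink y y = 0) (hxy : mink x y = 0) (hx0 : x ≠ 0) : ∃ c : ℝ, y = c • x := by
  have ht : x 0 ≠ 0 := fun h => hx0 (eq_zero_of_mink_self_eq_zero_of_apply_zero hx h)
  have hz : y 0 • x - x 0 • y = 0 := by
    refine eq_zero_of_mink_self_eq_zero_of_apply_zero ?_
      (by simp only [Pi.sub_apply, Pi.smul_apply, smul_eq_mul]; ring)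
    simp only [sub_eq_add_neg, ← neg_smul, mink_add_left, mink_add_right, mink_smul_left,
      mink_smul_right, hx, hy, hxy, mink_comm y x]
    ring
  refine ⟨y 0 / x 0, ?_⟩
  rw [div_eq_inv_mul, mul_smul, sub_eq_zero.1 hz, smul_smul, inv_mul_cancel₀ ht, one_smul]

theorem mink_eq_zero_of_mem_of_null {P : Submodule ℝ (Fin (n + 2) → ℝ)}
    (huniq : ∀ w₁ ∈ P, ∀ w₂ ∈ P,
      w₁ ≠ 0 → w₂ ≠ 0 → mink w₁ w₁ = 0 → mink w₂ w₂ = 0 → ∃ c : ℝ, w₂ = c • w₁)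
    {w z : Fin (n + 2) → ℝ} (hwP : w ∈ P) (hw0 : w ≠ 0) (hww : mink w w = 0) (hzP : z ∈ P) :
    mink w z = 0 := by
  -- `y` is null, hence a multiple of `w`, while `⟨y, w⟩ = -2 ⟨w, z⟩²`.
  set y := mink z z • w - (2 * mink w z) • z
  have hexpand : ∀ x, mink y x = mink z z * mink w x - 2 * mink w z * mink z x := fun x => by
    simp only [y, sub_eq_add_neg, ← neg_smul, mink_add_left, mink_smul_left]
    ring
  have hyy : mink y y = 0 := by
    rw [hexpand y, mink_comm w y, mink_comm z y, hexpand w, hexpand z, hww, mink_comm z w]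
    ring
  obtain ⟨c, hc⟩ : ∃ c : ℝ, y = c • w := by
    by_cases hy0 : y = 0
    · exact ⟨0, by rw [hy0, zero_smul]⟩
    · exact huniq w hwP y (P.sub_mem (P.smul_mem _ hwP) (P.smul_mem _ hzP)) hw0 hy0 hww hyy
  have hyw := hexpand w
  rw [hc, mink_smul_left, hww, mink_comm z w] at hyw
  exact mul_self_eq_zero.1 (by linarith)

theorem contr_smul_left (c : ℝ) (B B' : Fin (n + 2) → Fin (n + 2) → ℝ) :
    contr (c • B) B' = c * contr B B' := by
  simp only [contr, Pi.smul_apply, smul_eq_mul, mul_sum]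
  exact sum_congr rfl fun i _ => sum_congr rfl fun j _ => by ring

theorem contr_smul_right (c : ℝ) (B B' : Fin (n + 2) → Fin (n + 2) → ℝ) :
    contr B (c • B') = c * contr B B' := by
  simp only [contr, Pi.smul_apply, smul_eq_mul, mul_sum]
  exact sum_congr rfl fun i _ => sum_congr rfl fun j _ => by ring

theorem contr_wedge_wedge (x y z t : Fin (n + 2) → ℝ) :
    contr (wedge x y) (wedge z t) = 2 * (mink x z * mink y t - mink x t * mink y z) := by
  have h : contr (wedge x y) (wedge z t) =
      ∑ i, ∑ j, ((eps i * x i * z i) * (eps j * y j * t j)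
        - (eps i * x i * t i) * (eps j * y j * z j)
        - (eps i * y i * z i) * (eps j * x j * t j)
        + (eps i * y i * t i) * (eps j * x j * z j)) := by
    unfold contr wedge
    refine sum_congr rfl fun i _ => sum_congr rfl fun j _ => ?_
    ring
  rw [h]
  simp only [sum_add_distrib, sum_sub_distrib, ← sum_mul_sum]
  unfold mink
  ring

theorem contr_wedge_wedge_eq_zero_of_mink_eq_zero {u v u' v' : Fin (n + 2) → ℝ} {a b : ℝ}
    (hw0 : a • u + b • v ≠ 0) (hu' : mink (a • u + b • v) u' = 0)
    (hv' : mink (a • u + b • v) v' = 0) :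
    contr (wedge u v) (wedge u' v') = 0 := by
  simp only [mink_add_left, mink_smul_left] at hu' hv'
  rw [contr_wedge_wedge, mul_eq_zero, or_iff_right two_ne_zero]
  by_contra hD
  have ha : a = 0 := (mul_eq_zero.1 (by linear_combination mink v v' * hu' - mink v u' * hv' :
    a * (mink u u' * mink v v' - mink u v' * mink v u') = 0)).resolve_right hD
  have hb : b = 0 := (mul_eq_zero.1 (by linear_combination mink u u' * hv' - mink u v' * hu' :
    b * (mink u u' * mink v v' - mink u v' * mink v u') = 0)).resolve_right hD
  exact hw0 (by rw [ha, hb, zero_smul, zero_smul, add_zero])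

theorem mink_eq_zero_of_contr_wedge_wedge_eq_zero {u v u' v' z z' w : Fin (n + 2) → ℝ}
    (hcontr : contr (wedge u v) (wedge u' v') = 0) (hz : z ∈ Submodule.span ℝ {u, v})
    (hz' : z' ∈ Submodule.span ℝ {u', v'})
    (hw : w ∈ Submodule.span ℝ {u, v} ⊓ Submodule.span ℝ {u', v'})
    (hzw : mink z w = 0) (hz'w : mink z' w = 0) (hww : mink w w ≠ 0) :
    mink z z' = 0 := by
  obtain ⟨c, hc⟩ := exists_wedge_eq_smul_of_mem_span_pair hz (Submodule.mem_inf.1 hw).1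
  obtain ⟨c', hc'⟩ := exists_wedge_eq_smul_of_mem_span_pair hz' (Submodule.mem_inf.1 hw).2
  have h := contr_wedge_wedge z w z' w
  rw [hc, hc', contr_smul_left, contr_smul_right, hcontr, mink_comm w z', hzw, hz'w] at h
  exact (mul_eq_zero.1 (by linarith : mink z z' * mink w w = 0)).resolve_right hww

end Minkowski

theorem null_planes_intersect_along_null_line_iff_general (n : ℕ)
    (u v u' v' : Fin (n + 2) → ℝ)
    (huv : LinearIndependent ℝ ![u, v]) (huv' : LinearIndependent ℝ ![u', v'])
    (hex : ∃ w ∈ Submodule.span ℝ {u, v}, w ≠ 0 ∧ mink w w = 0)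
    (huniq : ∀ w₁ ∈ Submodule.span ℝ {u, v}, ∀ w₂ ∈ Submodule.span ℝ {u, v},
      w₁ ≠ 0 → w₂ ≠ 0 → mink w₁ w₁ = 0 → mink w₂ w₂ = 0 → ∃ c : ℝ, w₂ = c • w₁)
    (hex' : ∃ w ∈ Submodule.span ℝ {u', v'}, w ≠ 0 ∧ mink w w = 0)
    (huniq' : ∀ w₁ ∈ Submodule.span ℝ {u', v'}, ∀ w₂ ∈ Submodule.span ℝ {u', v'},
      w₁ ≠ 0 → w₂ ≠ 0 → mink w₁ w₁ = 0 → mink w₂ w₂ = 0 → ∃ c : ℝ, w₂ = c • w₁) :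
    (∃ w ∈ Submodule.span ℝ {u, v} ⊓ Submodule.span ℝ {u', v'}, w ≠ 0 ∧ mink w w = 0) ↔
    ((∀ i j k l, alt4 (fun i j k l => wedge u v i j * wedge u' v' k l) i j k l = 0) ∧
      contr (wedge u v) (wedge u' v') = 0) := by
  rw [alt4_wedge_mul_wedge_eq_zero_iff, not_linearIndependent_iff_exists_mem_inf_ne_zero huv huv']
  constructor
  · rintro ⟨w, hw, hw0, hww⟩
    refine ⟨⟨w, hw, hw0⟩, ?_⟩
    obtain ⟨hwP, hwP'⟩ := Submodule.mem_inf.1 hw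
    obtain ⟨a, b, rfl⟩ := Submodule.mem_span_pair.1 hwP
    exact contr_wedge_wedge_eq_zero_of_mink_eq_zero hw0
      (mink_eq_zero_of_mem_of_null huniq' hwP' hw0 hww (Submodule.subset_span (by simp)))
      (mink_eq_zero_of_mem_of_null huniq' hwP' hw0 hww (Submodule.subset_span (by simp)))
  · rintro ⟨⟨w, hw, hw0⟩, hcontr⟩
    by_cases hww : mink w w = 0
    · exact ⟨w, hw, hw0, hww⟩
    obtain ⟨z, hzP, hz0, hzz⟩ := hex
    obtain ⟨z', hz'P', hz'0, hz'z'⟩ := hex'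
    have hzz' : mink z z' = 0 := mink_eq_zero_of_contr_wedge_wedge_eq_zero hcontr hzP hz'P' hw
      (mink_eq_zero_of_mem_of_null huniq hzP hz0 hzz (Submodule.mem_inf.1 hw).1)
      (mink_eq_zero_of_mem_of_null huniq' hz'P' hz'0 hz'z' (Submodule.mem_inf.1 hw).2) hww
    obtain ⟨c, rfl⟩ := exists_eq_smul_of_mink_eq_zero hz'z' hzz (mink_comm z z' ▸ hzz') hz'0
    exact ⟨c • z', Submodule.mem_inf.2 ⟨hzP, Submodule.smul_mem _ c hz'P'⟩, hz0, hzz⟩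

/-- Two distinct null 2-planes intersect along a null line iff both the Plucker condition
`B_{[ij}B'_{kl]} = 0` and the null-contraction condition `B·B' = 0` hold. -/
theorem null_planes_intersect_along_null_line_iff (n : ℕ) (hn : 1 ≤ n)
    (u v u' v' : Fin (n + 2) → ℝ)
    (huv : LinearIndependent ℝ ![u, v]) (huv' : LinearIndependent ℝ ![u', v'])
    (hex : ∃ w ∈ Submodule.span ℝ {u, v}, w ≠ 0 ∧ mink w w = 0)
    (huniq : ∀ w₁ ∈ Submodule.span ℝ {u, v}, ∀ w₂ ∈ Submodule.span ℝ {u, v},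
      w₁ ≠ 0 → w₂ ≠ 0 → mink w₁ w₁ = 0 → mink w₂ w₂ = 0 → ∃ c : ℝ, w₂ = c • w₁)
    (hex' : ∃ w ∈ Submodule.span ℝ {u', v'}, w ≠ 0 ∧ mink w w = 0)
    (huniq' : ∀ w₁ ∈ Submodule.span ℝ {u', v'}, ∀ w₂ ∈ Submodule.span ℝ {u', v'},
      w₁ ≠ 0 → w₂ ≠ 0 → mink w₁ w₁ = 0 → mink w₂ w₂ = 0 → ∃ c : ℝ, w₂ = c • w₁)
    (hne : Submodule.span ℝ {u, v} ≠ Submodule.span ℝ {u', v'}) :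
    (∃ w ∈ Submodule.span ℝ {u, v} ⊓ Submodule.span ℝ {u', v'}, w ≠ 0 ∧ mink w w = 0) ↔
    ((∀ i j k l, alt4 (fun i j k l => wedge u v i j * wedge u' v' k l) i j k l = 0) ∧
      contr (wedge u v) (wedge u' v') = 0) :=
  null_planes_intersect_along_null_line_iff_general n u v u' v' huv huv' hex huniq hex' huniq'
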